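/- Let (V, ν, τ, τ*) be a PN space with τ, τ* sup-continuous, W a linear subspace of V, and define ν̄ on the quotient V/W by ν̄_{p+W}(x) := sup_{q∈W} ν_{p+q}(x). Then (V/W, ν̄, τ, τ*) is a probabilistic pseudo-normed space, i.e., ν̄ satisfies ν̄_{0+W} = ε₀, ν̄_{−(p+W)} = ν̄_{p+W}, ν̄_{(p+W)+(q+W)} ≥ τ(ν̄_{p+W}, ν̄_{q+W}), and ν̄_{p+W} ≤ τ*(ν̄_{α(p+W)}, ν̄_{(1−α)(p+W)}) for α ∈ [0,1]. -/

import Mathlib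

open Filter Topology Set

/-- A distribution function in `Δ⁺`: nondecreasing, left-continuous,
vanishing on `(-∞,0]` and bounded by `1`. -/
structure DistFun where
  toFun : ℝ → ℝ
  mono' : Monotone toFun
  leftCont' : ∀ x, Filter.Tendsto toFun (nhdsWithin x (Set.Iio x)) (nhds (toFun x))
  zero' : ∀ x ≤ (0 : ℝ), toFun x = 0
  le_one' : ∀ x, toFun x ≤ 1

instance : CoeFun DistFun (fun _ => ℝ → ℝ) := ⟨DistFun.toFun⟩

/-- Pointwise order on `Δ⁺`. -/
instance : LE DistFun := ⟨fun F G => ∀ x, F.toFun x ≤ G.toFun x⟩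

/-- The unit step distribution function `ε_a` for `a ≥ 0`. -/
noncomputable def unitStep (a : ℝ) (_ha : 0 ≤ a) : DistFun where
  toFun x := if x ≤ a then 0 else 1
  mono' := by
    intro x y hxy
    by_cases hx : x ≤ a <;> by_cases hy : y ≤ a <;> simp [hx, hy] <;> linarith
  leftCont' := by
    intro x
    by_cases hx : x ≤ a
    · have h : (fun y => if y ≤ a then (0:ℝ) else 1) =ᶠ[nhdsWithin x (Set.Iio x)]
          fun _ => (0:ℝ) := by
        filter_upwards [self_mem_nhdsWithin] with y hy
        exact if_pos ((le_of_lt hy).trans hx)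
      simpa [if_pos hx] using (tendsto_const_nhds (α := ℝ)).congr' h.symm
    · have hax : a < x := not_le.mp hx
      have h : (fun y => if y ≤ a then (0:ℝ) else 1) =ᶠ[nhdsWithin x (Set.Iio x)]
          fun _ => (1:ℝ) := by
        filter_upwards [(eventually_gt_nhds hax).filter_mono nhdsWithin_le_nhds] with y hy
        exact if_neg (not_le.mpr hy)
      simpa [if_neg hx] using (tendsto_const_nhds (α := ℝ)).congr' h.symm
  zero' := fun x hx => if_pos (hx.trans _ha)
  le_one' := by intro x; by_cases h : x ≤ a <;> simp [h]

/-- The maximal element `ε₀` of `Δ⁺`. -/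
noncomputable def eps0 : DistFun := unitStep 0 le_rfl

/-- The one-sided Lévy condition `(F,G;h)`. -/
def levyCond (F G : DistFun) (h : ℝ) : Prop :=
  ∀ x : ℝ, -(1/h) < x → x < 1/h →
    F.toFun (x - h) - h ≤ G.toFun x ∧ G.toFun x ≤ F.toFun (x + h) + h

/-- The Sibley (modified Lévy) metric on `Δ⁺`. -/
noncomputable def sibley (F G : DistFun) : ℝ :=
  sInf {h : ℝ | 0 < h ∧ h ≤ 1 ∧ levyCond F G h ∧ levyCond G F h}

/-- Triangle function: associative, commutative, nondecreasing binary
operation on `Δ⁺` with identity `ε₀`. -/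
structure IsTriangleFun (τ : DistFun → DistFun → DistFun) : Prop where
  comm : ∀ F G, τ F G = τ G F
  assoc : ∀ F G H, τ (τ F G) H = τ F (τ G H)
  mono : ∀ F G H, F ≤ G → τ F H ≤ τ G H
  ident : ∀ F, τ F eps0 = F

/-- Continuity of a triangle function w.r.t. the Sibley metric (sequential form). -/
def TriCont (τ : DistFun → DistFun → DistFun) : Prop :=
  ∀ (F G : ℕ → DistFun) (F₀ G₀ : DistFun),
    Filter.Tendsto (fun n => sibley (F n) F₀) Filter.atTop (nhds 0) →
    Filter.Tendsto (fun n => sibley (G n) G₀) Filter.atTop (nhds 0) →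
    Filter.Tendsto (fun n => sibley (τ (F n) (G n)) (τ F₀ G₀)) Filter.atTop (nhds 0)

/-- Sup-continuity of a triangle function: `τ (sup_i F_i) G = sup_i τ (F_i) G`
(pointwise). -/
def SupCont (τ : DistFun → DistFun → DistFun) : Prop :=
  ∀ {ι : Type} [Nonempty ι] (F : ι → DistFun) (S G : DistFun),
    (∀ x, S.toFun x = ⨆ i, (F i).toFun x) →
    ∀ x, (τ S G).toFun x = ⨆ i, (τ (F i) G).toFun x

/-- Domination `τ₁ ≫ τ₂` of triangle functions. -/
def Dominates (τ₁ τ₂ : DistFun → DistFun → DistFun) : Prop :=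
  ∀ F₁ F₂ G₁ G₂, τ₂ (τ₁ F₁ F₂) (τ₁ G₁ G₂) ≤ τ₁ (τ₂ F₁ G₁) (τ₂ F₂ G₂)

/-- A probabilistic pseudo-normed space `(V, ν, τ, τ*)`. -/
structure IsPPNSpace {V : Type*} [AddCommGroup V] [Module ℝ V]
    (ν : V → DistFun) (τ τs : DistFun → DistFun → DistFun) : Prop where
  tri : IsTriangleFun τ
  tri_s : IsTriangleFun τs
  cont : TriCont τ
  cont_s : TriCont τs
  tau_le : ∀ F G, τ F G ≤ τs F G
  N1' : ν 0 = eps0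
  N2 : ∀ p, ν (-p) = ν p
  N3 : ∀ p q, τ (ν p) (ν q) ≤ ν (p + q)
  N4 : ∀ (p : V) (α : ℝ), 0 ≤ α → α ≤ 1 →
    ν p ≤ τs (ν (α • p)) (ν ((1 - α) • p))

/-- A probabilistic normed space `(V, ν, τ, τ*)`. -/
structure IsPNSpace {V : Type*} [AddCommGroup V] [Module ℝ V]
    (ν : V → DistFun) (τ τs : DistFun → DistFun → DistFun)
    extends IsPPNSpace ν τ τs : Prop where
  N1 : ∀ p, ν p = eps0 ↔ p = 0

/-- The strong topology of a PN space, generated by the strong neighbourhoods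
`N_p(t) = {q : ν_{q-p}(t) > 1 - t}`. -/
def strongTop {V : Type*} [AddCommGroup V] (ν : V → DistFun) : TopologicalSpace V :=
  TopologicalSpace.generateFrom
    {S | ∃ (p : V) (t : ℝ), 0 < t ∧ S = {q | 1 - t < (ν (q - p)).toFun t}}

/-- A set is closed in the strong topology. -/
def StrongClosed {V : Type*} [AddCommGroup V] (ν : V → DistFun) (S : Set V) : Prop :=
  @IsClosed V (strongTop ν) S

/-- A strong Cauchy sequence. -/
def StrongCauchy {V : Type*} [AddCommGroup V] (ν : V → DistFun) (p : ℕ → V) : Prop :=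
  ∀ t : ℝ, 0 < t → ∃ N : ℕ, ∀ m n, N ≤ m → N ≤ n → 1 - t < (ν (p n - p m)).toFun t

/-- Strong convergence of a sequence to a point. -/
def StrongConv {V : Type*} [AddCommGroup V] (ν : V → DistFun) (p : ℕ → V) (x : V) : Prop :=
  ∀ t : ℝ, 0 < t → ∃ N : ℕ, ∀ n, N ≤ n → 1 - t < (ν (p n - x)).toFun t

/-- Strong completeness. -/
def StrongComplete {V : Type*} [AddCommGroup V] (ν : V → DistFun) : Prop :=
  ∀ p : ℕ → V, StrongCauchy ν p → ∃ x, StrongConv ν p x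

/-! Every representative `p` of a coset `P` satisfies `ν p ≤ ν̄ P`, and `ν̄ P ≤ G` as soon as
`ν p ≤ G` for all representatives; so each axiom for `ν̄` follows from the same axiom for
representatives, read through the coset maps `p ↦ -p`, `(p, q) ↦ p + q`, `p ↦ α • p`. Only in
`(N3)`, where `ν̄` stands inside `τ`, is a supremum needed on the small side; sup-continuity of
`τ` moves it out, one argument at a time. For `(N1)`, `ε₀` is the maximum of `Δ⁺`. -/

namespace DistFun

theorem ext_toFun {F G : DistFun} (h : ∀ x, F.toFun x = G.toFun x) : F = G := by
  cases F; cases G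
  simp only [mk.injEq]
  exact funext h

theorem le_antisymm {F G : DistFun} (hFG : F ≤ G) (hGF : G ≤ F) : F = G :=
  ext_toFun fun x => _root_.le_antisymm (hFG x) (hGF x)

theorem le_trans {F G H : DistFun} (hFG : F ≤ G) (hGH : G ≤ H) : F ≤ H :=
  fun x => _root_.le_trans (hFG x) (hGH x)

theorem le_eps0 (F : DistFun) : F ≤ eps0 := by
  intro x
  by_cases hx : x ≤ 0
  · simp [eps0, unitStep, hx, F.zero' x hx]
  · simpa [eps0, unitStep, hx] using F.le_one' x

theorem bddAbove_range_apply {ι : Sort*} (F : ι → DistFun) (x : ℝ) :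
    BddAbove (Set.range fun i => (F i).toFun x) :=
  ⟨1, by rintro _ ⟨i, rfl⟩; exact (F i).le_one' x⟩

end DistFun

theorem IsTriangleFun.mono₂ {τ : DistFun → DistFun → DistFun} (hτ : IsTriangleFun τ)
    {F F' G G' : DistFun} (hF : F ≤ F') (hG : G ≤ G') : τ F G ≤ τ F' G' := by
  refine DistFun.le_trans (hτ.mono F F' G hF) ?_
  rw [hτ.comm F', hτ.comm F']
  exact hτ.mono G G' F' hG

theorem SupCont.le_of_forall_mem {τ : DistFun → DistFun → DistFun} (hτ : SupCont τ)
    {𝒮 : Set DistFun} (hne : 𝒮.Nonempty) {S G H : DistFun}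
    (hS : ∀ x, S.toFun x = ⨆ F : 𝒮, F.1.toFun x) (hle : ∀ F ∈ 𝒮, τ F G ≤ H) :
    τ S G ≤ H := by
  have := hne.to_subtype
  intro x
  rw [hτ (fun F : 𝒮 => F.1) S G hS x]
  exact ciSup_le fun F => hle F.1 F.2 x

def IsQuotientProbNorm {V : Type*} [AddCommGroup V] [Module ℝ V] (ν : V → DistFun)
    (W : Submodule ℝ V) (ν' : V ⧸ W → DistFun) : Prop :=
  ∀ (p : V) (x : ℝ), (ν' (W.mkQ p)).toFun x = ⨆ q : W, (ν (p + (q : V))).toFun x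

namespace IsQuotientProbNorm

variable {V : Type*} [AddCommGroup V] [Module ℝ V] {ν : V → DistFun} {W : Submodule ℝ V}
  {ν' : V ⧸ W → DistFun}

theorem le_mkQ (hν' : IsQuotientProbNorm ν W ν') (p : V) : ν p ≤ ν' (W.mkQ p) := by
  intro x
  rw [hν']
  simpa using le_ciSup (DistFun.bddAbove_range_apply (fun q : W => ν (p + q)) x) 0

theorem apply_le_iff (hν' : IsQuotientProbNorm ν W ν') {P : V ⧸ W} {x c : ℝ} :
    (ν' P).toFun x ≤ c ↔ ∀ p, W.mkQ p = P → (ν p).toFun x ≤ c := by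
  obtain ⟨p, rfl⟩ := W.mkQ_surjective P
  rw [hν', ciSup_le_iff (DistFun.bddAbove_range_apply _ x)]
  constructor
  · intro hle p' hp'
    have hmem : p' - p ∈ W := (Submodule.Quotient.eq W).mp hp'
    simpa using hle ⟨p' - p, hmem⟩
  · intro hle q
    exact hle _ (by simp)

theorem le_iff (hν' : IsQuotientProbNorm ν W ν') {P : V ⧸ W} {G : DistFun} :
    ν' P ≤ G ↔ ∀ p, W.mkQ p = P → ν p ≤ G := by
  change (∀ x, (ν' P).toFun x ≤ G.toFun x) ↔ ∀ p, W.mkQ p = P → ∀ x, (ν p).toFun x ≤ G.toFun x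
  simp only [hν'.apply_le_iff]
  exact ⟨fun hle p hp x => hle x p hp, fun hle x p hp => hle p hp x⟩

theorem apply_eq_iSup_image (hν' : IsQuotientProbNorm ν W ν') (P : V ⧸ W) (x : ℝ) :
    (ν' P).toFun x = ⨆ F : ν '' (W.mkQ ⁻¹' {P}), F.1.toFun x := by
  obtain ⟨p, hp⟩ := W.mkQ_surjective P
  have : Nonempty (ν '' (W.mkQ ⁻¹' {P})) := ⟨⟨ν p, p, hp, rfl⟩⟩
  refine _root_.le_antisymm (hν'.apply_le_iff.mpr fun p' hp' => ?_) (ciSup_le ?_)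
  · exact le_ciSup (DistFun.bddAbove_range_apply (fun F : ν '' (W.mkQ ⁻¹' {P}) => F.1) x)
      ⟨ν p', p', hp', rfl⟩
  · rintro ⟨_, p', hp', rfl⟩
    exact (hp' : W.mkQ p' = P) ▸ hν'.le_mkQ p' x

theorem map_zero (hν' : IsQuotientProbNorm ν W ν') (h0 : ν 0 = eps0) : ν' 0 = eps0 := by
  refine DistFun.le_antisymm (DistFun.le_eps0 _) ?_
  simpa [h0] using hν'.le_mkQ 0

theorem map_neg (hν' : IsQuotientProbNorm ν W ν') (hneg : ∀ p, ν (-p) = ν p) (P : V ⧸ W) :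
    ν' (-P) = ν' P := by
  have neg_le : ∀ P : V ⧸ W, ν' (-P) ≤ ν' P := fun P =>
    hν'.le_iff.mpr fun p hp => by
      have hP : W.mkQ (-p) = P := by rw [_root_.map_neg, hp, neg_neg]
      rw [← hneg p, ← hP]
      exact hν'.le_mkQ (-p)
  exact DistFun.le_antisymm (neg_le P) (by simpa using neg_le (-P))

theorem triangle_le (hν' : IsQuotientProbNorm ν W ν') {τ : DistFun → DistFun → DistFun}
    (hcomm : ∀ F G, τ F G = τ G F) (hτ : SupCont τ)
    (htri : ∀ p q, τ (ν p) (ν q) ≤ ν (p + q)) (P Q : V ⧸ W) :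
    τ (ν' P) (ν' Q) ≤ ν' (P + Q) := by
  have fiber_nonempty : ∀ P : V ⧸ W, (ν '' (W.mkQ ⁻¹' {P})).Nonempty := fun P =>
    (W.mkQ_surjective P).elim fun p hp => ⟨ν p, p, hp, rfl⟩
  refine hτ.le_of_forall_mem (fiber_nonempty P) (hν'.apply_eq_iSup_image P) ?_
  rintro _ ⟨p, hp, rfl⟩
  rw [hcomm]
  refine hτ.le_of_forall_mem (fiber_nonempty Q) (hν'.apply_eq_iSup_image Q) ?_
  rintro _ ⟨q, hq, rfl⟩
  have hPQ : W.mkQ (q + p) = P + Q := by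
    rw [_root_.map_add, (hp : W.mkQ p = P), (hq : W.mkQ q = Q), add_comm]
  exact hPQ ▸ DistFun.le_trans (htri q p) (hν'.le_mkQ (q + p))

theorem le_convex_split (hν' : IsQuotientProbNorm ν W ν') {τs : DistFun → DistFun → DistFun}
    (hτs : IsTriangleFun τs)
    (hsplit : ∀ (p : V) (α : ℝ), 0 ≤ α → α ≤ 1 → ν p ≤ τs (ν (α • p)) (ν ((1 - α) • p)))
    (P : V ⧸ W) (α : ℝ) (hα₀ : 0 ≤ α) (hα₁ : α ≤ 1) :
    ν' P ≤ τs (ν' (α • P)) (ν' ((1 - α) • P)) := by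
  refine hν'.le_iff.mpr fun p hp => DistFun.le_trans (hsplit p α hα₀ hα₁) ?_
  subst hp
  exact hτs.mono₂ (by simpa using hν'.le_mkQ (α • p)) (by simpa using hν'.le_mkQ ((1 - α) • p))

end IsQuotientProbNorm

theorem quotient_is_PPN_general {V : Type*} [AddCommGroup V] [Module ℝ V]
    (ν : V → DistFun) (τ τs : DistFun → DistFun → DistFun)
    (h : IsPNSpace ν τ τs) (hτ : SupCont τ)
    (W : Submodule ℝ V)
    (ν' : V ⧸ W → DistFun)
    (hν' : ∀ (p : V) (x : ℝ),
      (ν' (W.mkQ p)).toFun x = ⨆ q : W, (ν (p + (q : V))).toFun x) :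
    IsPPNSpace ν' τ τs :=
  have hν' : IsQuotientProbNorm ν W ν' := hν'
  { h.toIsPPNSpace with
    N1' := hν'.map_zero h.N1'
    N2 := hν'.map_neg h.N2
    N3 := hν'.triangle_le h.tri.comm hτ h.N3
    N4 := hν'.le_convex_split h.tri_s h.N4 }

theorem quotient_is_PPN {V : Type*} [AddCommGroup V] [Module ℝ V]
    (ν : V → DistFun) (τ τs : DistFun → DistFun → DistFun)
    (h : IsPNSpace ν τ τs) (hτ : SupCont τ) (hτs : SupCont τs)
    (W : Submodule ℝ V)
    (ν' : V ⧸ W → DistFun)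
    (hν' : ∀ (p : V) (x : ℝ),
      (ν' (W.mkQ p)).toFun x = ⨆ q : W, (ν (p + (q : V))).toFun x) :
    IsPPNSpace ν' τ τs :=
  quotient_is_PPN_general ν τ τs h hτ W ν' hν'
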